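/- Fix μ̂ ∈ ℝ and σ̂ > 0, fix constants C > 0 and Ψ > 0, and define the surrogate reward r : ℝ → ℝ by r(a) = −C·(μ̂ + σ̂·λ((a − μ̂)/σ̂) − a)·Ψ, where λ is the inverse Mills ratio. Then r is differentiable on ℝ with r'(a) = C·Ψ·(1 − λ'((a − μ̂)/σ̂)) > 0 for every a ∈ ℝ; in particular r is strictly increasing, so the reward gradient consistently incentivizes increasing the action. -/

import Mathlib

open Real MeasureTheory

/-- Standard normal density `φ(z) = exp(−z²/2)/√(2π)`. -/
noncomputable def stdNormalPdf (z : ℝ) : ℝ :=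
  Real.exp (-z ^ 2 / 2) / Real.sqrt (2 * Real.pi)

/-- Standard normal cumulative distribution function `Φ`. -/
noncomputable def stdNormalCdf (z : ℝ) : ℝ :=
  ∫ t in Set.Iic z, stdNormalPdf t

/-- Inverse Mills ratio `λ(z) = φ(z)/(1 − Φ(z))`. -/
noncomputable def mills (z : ℝ) : ℝ :=
  stdNormalPdf z / (1 - stdNormalCdf z)

/-!
By the quotient rule `λ' = λ (λ - z)`. The bounds `0 < λ' < 1` say that the normal law truncated
to `(z, ∞)` has mean `λ(z) > z` and positive variance `1 - λ (λ - z)`, i.e.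
`∫_z^∞ (t - z) φ > 0` and `∫_z^∞ (t - λ)² φ > 0`. Both integrands have explicit antiderivatives,
`-φ - zΦ` and `(2λ - t) φ + (1 + λ²) Φ`, which are nondecreasing on `(z, ∞)` and strictly
increasing on `(z, λ)`, hence strictly below their limits at `+∞` already at `t = z`. The chain
rule then gives `r'(a) = C Ψ (1 - λ'((a - μ̂)/σ̂)) > 0`.
-/

open Filter Set Topology

lemma stdNormalPdf_eq_gaussianPDFReal : stdNormalPdf = ProbabilityTheory.gaussianPDFReal 0 1 := by
  ext z
  simp [stdNormalPdf, ProbabilityTheory.gaussianPDFReal, div_eq_inv_mul]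

lemma stdNormalPdf_pos (z : ℝ) : 0 < stdNormalPdf z := by
  unfold stdNormalPdf
  positivity

lemma integrable_stdNormalPdf : Integrable stdNormalPdf :=
  stdNormalPdf_eq_gaussianPDFReal ▸ ProbabilityTheory.integrable_gaussianPDFReal 0 1

lemma integral_stdNormalPdf : ∫ z, stdNormalPdf z = 1 :=
  stdNormalPdf_eq_gaussianPDFReal ▸ ProbabilityTheory.integral_gaussianPDFReal_eq_one 0 one_ne_zero

lemma hasDerivAt_stdNormalPdf (z : ℝ) : HasDerivAt stdNormalPdf (-z * stdNormalPdf z) z := by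
  have hexponent : HasDerivAt (fun t : ℝ => -t ^ 2 / 2) (-z) z :=
    ((hasDerivAt_pow 2 z).neg.div_const 2).congr_deriv (by ring)
  refine (hexponent.exp.div_const (√(2 * π))).congr_deriv ?_
  simp only [stdNormalPdf]
  ring

lemma tendsto_rpow_mul_stdNormalPdf_atTop (s : ℝ) :
    Tendsto (fun z => z ^ s * stdNormalPdf z) atTop (𝓝 0) := by
  have h := (rpow_mul_exp_neg_mul_sq_isLittleO_exp_neg (by norm_num : (0 : ℝ) < 1 / 2) s
    ).tendsto_zero_of_tendsto (tendsto_exp_atBot.comp (tendsto_id.const_mul_atTop_of_neg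
      (by norm_num : -(1 / 2 : ℝ) < 0)))
  convert h.div_const (√(2 * π)) using 2 with z
  · simp only [stdNormalPdf]
    ring_nf
  · simp

lemma tendsto_stdNormalPdf_atTop : Tendsto stdNormalPdf atTop (𝓝 0) := by
  simpa using tendsto_rpow_mul_stdNormalPdf_atTop 0

lemma tendsto_mul_stdNormalPdf_atTop : Tendsto (fun z => z * stdNormalPdf z) atTop (𝓝 0) := by
  simpa using tendsto_rpow_mul_stdNormalPdf_atTop 1

lemma hasDerivAt_stdNormalCdf (z : ℝ) : HasDerivAt stdNormalCdf (stdNormalPdf z) z := by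
  have hcont : Continuous stdNormalPdf := by unfold stdNormalPdf; fun_prop
  have hcdf : stdNormalCdf = fun u => stdNormalCdf 0 + ∫ t in (0 : ℝ)..u, stdNormalPdf t := by
    ext u
    rw [← intervalIntegral.integral_Iic_sub_Iic integrable_stdNormalPdf.integrableOn
      integrable_stdNormalPdf.integrableOn, stdNormalCdf, stdNormalCdf]
    ring
  rw [hcdf]
  exact (intervalIntegral.integral_hasDerivAt_right integrable_stdNormalPdf.intervalIntegrable
    (hcont.stronglyMeasurableAtFilter _ _) hcont.continuousAt).const_add _

lemma tendsto_stdNormalCdf_atTop : Tendsto stdNormalCdf atTop (𝓝 1) :=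
  integral_stdNormalPdf ▸ (aecover_Iic tendsto_id).integral_tendsto_of_countably_generated
    integrable_stdNormalPdf

lemma lt_of_hasDerivAt_of_tendsto_atTop {f f' : ℝ → ℝ} {a b m : ℝ} (hab : a < b)
    (hf : ∀ x, HasDerivAt f (f' x) x) (hf'_nonneg : ∀ x ∈ Ioi a, 0 ≤ f' x)
    (hf'_pos : ∀ x ∈ Ioo a b, 0 < f' x) (hlim : Tendsto f atTop (𝓝 m)) : f a < m := by
  have hcont : Continuous f := continuous_iff_continuousAt.2 fun x => (hf x).continuousAt
  have hstrict : StrictMonoOn f (Icc a b) :=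
    strictMonoOn_of_hasDerivWithinAt_pos (convex_Icc a b) hcont.continuousOn
      (fun x _ => (hf x).hasDerivWithinAt) (by rwa [interior_Icc])
  have hmono : MonotoneOn f (Ici a) :=
    monotoneOn_of_hasDerivWithinAt_nonneg (convex_Ici a) hcont.continuousOn
      (fun x _ => (hf x).hasDerivWithinAt) (by rwa [interior_Ici])
  have hfb : f b ≤ m := ge_of_tendsto hlim <| (eventually_ge_atTop b).mono fun x hx =>
    hmono (mem_Ici.2 hab.le) (mem_Ici.2 (hab.le.trans hx)) hx
  exact (hstrict (left_mem_Icc.2 hab.le) (right_mem_Icc.2 hab.le) hab).trans_le hfb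

lemma stdNormalCdf_lt_one (z : ℝ) : stdNormalCdf z < 1 :=
  lt_of_hasDerivAt_of_tendsto_atTop (lt_add_one z) hasDerivAt_stdNormalCdf
    (fun t _ => (stdNormalPdf_pos t).le) (fun t _ => stdNormalPdf_pos t) tendsto_stdNormalCdf_atTop

lemma one_sub_stdNormalCdf_pos (z : ℝ) : 0 < 1 - stdNormalCdf z :=
  sub_pos.2 (stdNormalCdf_lt_one z)

lemma mul_one_sub_stdNormalCdf_lt_stdNormalPdf (z : ℝ) :
    z * (1 - stdNormalCdf z) < stdNormalPdf z := by
  have h := lt_of_hasDerivAt_of_tendsto_atTop (lt_add_one z)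
    (f := fun t => -stdNormalPdf t - z * stdNormalCdf t) (f' := fun t => (t - z) * stdNormalPdf t)
    (fun t => ((hasDerivAt_stdNormalPdf t).neg.sub ((hasDerivAt_stdNormalCdf t).const_mul z)
      ).congr_deriv (by ring))
    (fun t ht => mul_nonneg (sub_nonneg.2 (le_of_lt ht)) (stdNormalPdf_pos t).le)
    (fun t ht => mul_pos (sub_pos.2 ht.1) (stdNormalPdf_pos t))
    (tendsto_stdNormalPdf_atTop.neg.sub (tendsto_stdNormalCdf_atTop.const_mul z))
  linarith

lemma lt_mills (z : ℝ) : z < mills z :=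
  (lt_div_iff₀ (one_sub_stdNormalCdf_pos z)).2 (mul_one_sub_stdNormalCdf_lt_stdNormalPdf z)

lemma mills_pos (z : ℝ) : 0 < mills z :=
  div_pos (stdNormalPdf_pos z) (one_sub_stdNormalCdf_pos z)

lemma mills_mul_mills_sub_lt_one (z : ℝ) : mills z * (mills z - z) < 1 := by
  set l := mills z
  have hQ := one_sub_stdNormalCdf_pos z
  have h := lt_of_hasDerivAt_of_tendsto_atTop (lt_mills z)
    (f := fun t => -((t - 2 * l) * stdNormalPdf t) + (1 + l ^ 2) * stdNormalCdf t)
    (f' := fun t => (t - l) ^ 2 * stdNormalPdf t)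
    (fun t => ((((hasDerivAt_id t).sub_const (2 * l)).mul (hasDerivAt_stdNormalPdf t)).neg.add
      ((hasDerivAt_stdNormalCdf t).const_mul (1 + l ^ 2))).congr_deriv (by simp only [id]; ring))
    (fun t _ => mul_nonneg (sq_nonneg _) (stdNormalPdf_pos t).le)
    (fun t ht => mul_pos (sq_pos_of_neg (sub_neg.2 ht.2)) (stdNormalPdf_pos t))
    (m := 1 + l ^ 2) (by
      convert (tendsto_mul_stdNormalPdf_atTop.sub (tendsto_stdNormalPdf_atTop.const_mul (2 * l))
        ).neg.add (tendsto_stdNormalCdf_atTop.const_mul (1 + l ^ 2)) using 2 <;> ring)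
  have hpdf : stdNormalPdf z = l * (1 - stdNormalCdf z) := (div_mul_cancel₀ _ hQ.ne').symm
  rw [hpdf] at h
  nlinarith

lemma hasDerivAt_mills (z : ℝ) : HasDerivAt mills (mills z * (mills z - z)) z := by
  refine ((hasDerivAt_stdNormalPdf z).div ((hasDerivAt_stdNormalCdf z).const_sub 1)
    (one_sub_stdNormalCdf_pos z).ne').congr_deriv ?_
  have hQ := (one_sub_stdNormalCdf_pos z).ne'
  simp only [mills]
  field_simp
  ring

lemma deriv_mills_mem_Ioo (z : ℝ) : deriv mills z ∈ Ioo 0 1 := by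
  rw [(hasDerivAt_mills z).deriv]
  exact ⟨mul_pos (mills_pos z) (sub_pos.2 (lt_mills z)), mills_mul_mills_sub_lt_one z⟩

lemma hasDerivAt_surrogateReward {g : ℝ → ℝ} {μ σ : ℝ} (C Ψ : ℝ) (hσ : σ ≠ 0) {a : ℝ}
    (hg : DifferentiableAt ℝ g ((a - μ) / σ)) :
    HasDerivAt (fun x => -C * (μ + σ * g ((x - μ) / σ) - x) * Ψ)
      (C * Ψ * (1 - deriv g ((a - μ) / σ))) a := by
  have hz : HasDerivAt (fun x => (x - μ) / σ) (1 / σ) a :=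
    ((hasDerivAt_id a).sub_const μ).div_const σ
  refine (((((hg.hasDerivAt.comp a hz).const_mul σ).const_add μ).sub (hasDerivAt_id a)).const_mul
    (-C)).mul_const Ψ |>.congr_deriv ?_
  field_simp
  ring

/-- **Proposition 2, part 1 (Gradient Consistency).** For `σ̂ > 0`, `C > 0`,
`Ψ > 0`, the surrogate reward `r(a) = −C·(μ̂ + σ̂·λ((a − μ̂)/σ̂) − a)·Ψ` is
differentiable with `r'(a) = C·Ψ·(1 − λ'((a − μ̂)/σ̂)) > 0` for every `a`;
in particular `r` is strictly increasing. -/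
theorem surrogateReward_gradient_consistency
    (μhat σhat C Ψ : ℝ) (hσ : 0 < σhat) (hC : 0 < C) (hΨ : 0 < Ψ) :
    Differentiable ℝ (fun a : ℝ => -C * (μhat + σhat * mills ((a - μhat) / σhat) - a) * Ψ) ∧
    (∀ a : ℝ,
      deriv (fun a : ℝ => -C * (μhat + σhat * mills ((a - μhat) / σhat) - a) * Ψ) a
        = C * Ψ * (1 - deriv mills ((a - μhat) / σhat)) ∧
      0 < deriv (fun a : ℝ => -C * (μhat + σhat * mills ((a - μhat) / σhat) - a) * Ψ) a) ∧
    StrictMono (fun a : ℝ => -C * (μhat + σhat * mills ((a - μhat) / σhat) - a) * Ψ) := by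
  have hr (a : ℝ) := hasDerivAt_surrogateReward C Ψ hσ.ne'
    (hasDerivAt_mills ((a - μhat) / σhat)).differentiableAt
  have hpos (a : ℝ) : 0 < C * Ψ * (1 - deriv mills ((a - μhat) / σhat)) :=
    mul_pos (mul_pos hC hΨ) (sub_pos.2 (deriv_mills_mem_Ioo _).2)
  exact ⟨fun a => (hr a).differentiableAt, fun a => ⟨(hr a).deriv, (hr a).deriv ▸ hpos a⟩,
    strictMono_of_hasDerivAt_pos hr hpos⟩
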